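/- Let X ≥ 0 be a nonnegative random variable with Laplace–Stieltjes transform L(λ) = E[e^{−λX}], λ ≥ 0. Suppose E[X^s] < ∞ for some s ∈ (n, n+1), where n ≥ 0 is an integer (so the moments m_k = E[X^k] are finite for 0 ≤ k ≤ n). Then E[X^s] = ((−1)^{n+1}/Γ(−s)) · ∫₀^∞ Q_n(λ)/λ^{s+1} dλ, where Q_n(λ) = (−1)^{n+1}·(L(λ) − Σ_{k=0}^{n} (−1)^k m_k λ^k/k!). -/

import Mathlib

open MeasureTheory Real Set Filter
open scoped Topology

noncomputable def Prem (m : ℕ) (t : ℝ) : ℝ :=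
  Real.exp (-t) - ∑ k ∈ Finset.range m, (-1 : ℝ) ^ k * t ^ k / (Nat.factorial k)

lemma Prem_zero (t : ℝ) : Prem 0 t = Real.exp (-t) := by simp [Prem]

lemma Prem_succ (m : ℕ) (t : ℝ) :
    Prem (m + 1) t = Prem m t - (-1 : ℝ) ^ m * t ^ m / (Nat.factorial m) := by
  simp [Prem, Finset.sum_range_succ]; ring

lemma Prem_continuous (m : ℕ) : Continuous (Prem m) := by
  unfold Prem
  exact (Real.continuous_exp.comp continuous_neg).sub (by continuity)

lemma Prem_hasDerivAt (m : ℕ) (t : ℝ) : HasDerivAt (Prem (m + 1)) (-(Prem m t)) t := by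
  induction m generalizing t with
  | zero =>
    have h : HasDerivAt (fun t : ℝ => Real.exp (-t) - 1) (-(Real.exp (-t))) t := by
      simpa using ((Real.hasDerivAt_exp (-t)).comp t (hasDerivAt_neg t)).sub_const 1
    refine h.congr_of_eventuallyEq (Eventually.of_forall fun u => ?_) |>.congr_deriv (by
      rw [Prem_zero])
    simp [Prem_succ, Prem_zero]
  | succ m ih =>
    have h1 : HasDerivAt (fun u : ℝ => (-1 : ℝ) ^ (m+1) * u ^ (m+1) / (Nat.factorial (m+1)))
        ((-1 : ℝ) ^ (m+1) * ((m+1) * t ^ m) / (Nat.factorial (m+1))) t := by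
      exact (((hasDerivAt_pow (m+1) t).const_mul ((-1:ℝ)^(m+1))).div_const _).congr_deriv
        (by push_cast; ring)
    have h2 : HasDerivAt (Prem (m + 2))
        (-(Prem m t) - (-1 : ℝ) ^ (m+1) * ((m+1) * t ^ m) / (Nat.factorial (m+1))) t := by
      refine ((ih t).sub h1).congr_of_eventuallyEq (Eventually.of_forall fun u => ?_)
      rw [Prem_succ (m+1) u]; rfl
    refine h2.congr_deriv ?_
    rw [Prem_succ m t]
    rw [Nat.factorial_succ]
    push_cast
    have : (m : ℝ) + 1 ≠ 0 := by positivity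
    field_simp
    ring

lemma Prem_zero_eval (m : ℕ) : Prem (m + 1) 0 = 0 := by
  induction m with
  | zero => simp [Prem_succ, Prem_zero]
  | succ m ih => rw [Prem_succ, ih]; simp

lemma Prem_ftc (m : ℕ) (t : ℝ) :
    Prem (m + 1) t = ∫ u in (0:ℝ)..t, -(Prem m u) := by
  rw [intervalIntegral.integral_eq_sub_of_hasDerivAt
    (fun u _ => Prem_hasDerivAt m u)
    (((Prem_continuous m).neg).intervalIntegrable 0 t), Prem_zero_eval, sub_zero]

lemma Prem_sign (m : ℕ) {t : ℝ} (ht : 0 ≤ t) : 0 ≤ (-1 : ℝ) ^ m * Prem m t := by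
  induction m generalizing t with
  | zero => simpa [Prem_zero] using (Real.exp_pos (-t)).le
  | succ m ih =>
    rw [Prem_ftc m t]
    rw [← intervalIntegral.integral_const_mul]
    apply intervalIntegral.integral_nonneg ht
    intro u hu
    have := ih hu.1
    calc (0:ℝ) ≤ (-1:ℝ)^m * Prem m u := this
    _ = (-1:ℝ)^(m+1) * -(Prem m u) := by ring

lemma Prem_bound (m : ℕ) {t : ℝ} (ht : 0 ≤ t) : |Prem m t| ≤ t ^ m / (Nat.factorial m) := by
  induction m generalizing t with
  | zero => simp [Prem_zero, abs_of_pos (Real.exp_pos _), Real.exp_le_one_iff, neg_nonpos, ht]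
  | succ m ih =>
    rw [Prem_ftc m t]
    calc |∫ u in (0:ℝ)..t, -(Prem m u)| ≤ ∫ u in (0:ℝ)..t, |(-(Prem m u))| := by
          simpa [intervalIntegral.integral_of_le ht] using
            (norm_integral_le_integral_norm (f := fun u => -(Prem m u))
              (μ := volume.restrict (Ioc (0:ℝ) t)))
    _ ≤ ∫ u in (0:ℝ)..t, u ^ m / (Nat.factorial m) := by
          apply intervalIntegral.integral_mono_on ht
          · exact ((Prem_continuous m).neg.abs).intervalIntegrable 0 t
          · exact (by continuity : Continuous fun u : ℝ => u ^ m / (Nat.factorial m)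
              ).intervalIntegrable 0 t
          · intro u hu; simpa [abs_neg] using ih hu.1
    _ = t ^ (m+1) / (Nat.factorial (m+1)) := by
          rw [intervalIntegral.integral_div, integral_pow]
          rw [Nat.factorial_succ]
          have h1 : ((m:ℝ)+1) ≠ 0 := by positivity
          have h2 : ((Nat.factorial m : ℝ)) ≠ 0 := Nat.cast_ne_zero.2 (Nat.factorial_ne_zero m)
          push_cast
          field_simp
          simp

lemma Prem_measurable (m : ℕ) (r : ℝ) :
    Measurable (fun t : ℝ => Prem m t * t ^ r) :=
  (Prem_continuous m).measurable.mul (measurable_id.pow_const r)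

lemma Prem_tail (m : ℕ) {t : ℝ} (ht : 1 ≤ t) :
    |Prem m t| ≤ Real.exp (-t) + Real.exp 1 * t ^ ((m:ℝ) - 1) := by
  have ht0 : (0:ℝ) < t := lt_of_lt_of_le one_pos ht
  match m with
  | 0 =>
    rw [Prem_zero, abs_of_pos (Real.exp_pos _)]
    have : 0 ≤ Real.exp 1 * t ^ ((0:ℝ) - 1) := by positivity
    push_cast; linarith
  | m + 1 =>
    have hS : |∑ k ∈ Finset.range (m+1), (-1 : ℝ) ^ k * t ^ k / (Nat.factorial k)|
        ≤ Real.exp 1 * t ^ m := by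
      calc |∑ k ∈ Finset.range (m+1), (-1 : ℝ) ^ k * t ^ k / (Nat.factorial k)|
          ≤ ∑ k ∈ Finset.range (m+1), |(-1 : ℝ) ^ k * t ^ k / (Nat.factorial k)| :=
            Finset.abs_sum_le_sum_abs _ _
        _ ≤ ∑ k ∈ Finset.range (m+1), t ^ m / (Nat.factorial k) := by
            apply Finset.sum_le_sum
            intro k hk
            rw [abs_div, abs_mul, abs_pow, abs_pow, abs_neg, abs_one, one_pow, one_mul,
              abs_of_pos ht0, Nat.abs_cast]
            apply div_le_div_of_nonneg_right ?_ (by positivity)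
            · exact pow_le_pow_right₀ ht (Nat.lt_succ_iff.mp (Finset.mem_range.mp hk))
        _ = (∑ k ∈ Finset.range (m+1), (1:ℝ) / (Nat.factorial k)) * t ^ m := by
            rw [Finset.sum_mul]; congr 1; ext k; ring
        _ ≤ Real.exp 1 * t ^ m := by
            apply mul_le_mul_of_nonneg_right ?_ (by positivity)
            · simpa using Real.sum_le_exp_of_nonneg zero_le_one (m+1)
    have hcast : t ^ m = t ^ (((m+1:ℕ):ℝ) - 1) := by
      rw [show ((m+1:ℕ):ℝ) - 1 = (m:ℕ) by push_cast; ring, Real.rpow_natCast]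
    calc |Prem (m+1) t| ≤ Real.exp (-t) +
          |∑ k ∈ Finset.range (m+1), (-1 : ℝ) ^ k * t ^ k / (Nat.factorial k)| := by
          rw [Prem]
          refine (abs_sub _ _).trans ?_
          rw [abs_of_pos (Real.exp_pos _)]
      _ ≤ Real.exp (-t) + Real.exp 1 * t ^ (((m+1:ℕ):ℝ) - 1) := by
          rw [← hcast]; linarith

lemma Prem_integrableOn {m : ℕ} {r : ℝ} (h1 : -(m:ℝ) - 1 < r) (h2 : r < -(m:ℝ)) :
    IntegrableOn (fun t : ℝ => Prem m t * t ^ r) (Ioi (0:ℝ)) := by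
  have hmeas : AEStronglyMeasurable (fun t : ℝ => Prem m t * t ^ r) volume :=
    (Prem_measurable m r).aestronglyMeasurable
  have hA : IntegrableOn (fun t : ℝ => Prem m t * t ^ r) (Ioc (0:ℝ) 1) := by
    have hint : IntegrableOn (fun t : ℝ => t ^ ((m:ℝ) + r) / (Nat.factorial m))
        (Ioc (0:ℝ) 1) := by
      have h' : IntervalIntegrable (fun x : ℝ => x ^ ((m:ℝ)+r)) volume 0 1 :=
        intervalIntegral.intervalIntegrable_rpow' (by linarith)
      exact ((intervalIntegrable_iff_integrableOn_Ioc_of_le zero_le_one).mp h').div_const _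
    refine Integrable.mono' hint hmeas.restrict ?_
    rw [ae_restrict_iff' measurableSet_Ioc]
    refine Eventually.of_forall fun t ht => ?_
    have ht0 : 0 < t := ht.1
    rw [Real.norm_eq_abs, abs_mul, abs_of_pos (Real.rpow_pos_of_pos ht0 r)]
    calc |Prem m t| * t ^ r ≤ (t ^ m / (Nat.factorial m)) * t ^ r := by
          apply mul_le_mul_of_nonneg_right (Prem_bound m ht0.le)
            (Real.rpow_pos_of_pos ht0 r).le
      _ = t ^ ((m:ℝ) + r) / (Nat.factorial m) := by
          rw [← Real.rpow_natCast t m, div_mul_eq_mul_div, ← Real.rpow_add ht0]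
  have hB : IntegrableOn (fun t : ℝ => Prem m t * t ^ r) (Ioi (1:ℝ)) := by
    have hint : IntegrableOn
        (fun t : ℝ => Real.exp (-1 * t) + Real.exp 1 * t ^ ((m:ℝ) - 1 + r))
        (Ioi (1:ℝ)) := by
      exact (exp_neg_integrableOn_Ioi 1 one_pos).add
        ((integrableOn_Ioi_rpow_of_lt (by linarith) one_pos).const_mul _)
    refine Integrable.mono' hint hmeas.restrict ?_
    rw [ae_restrict_iff' measurableSet_Ioi]
    refine Eventually.of_forall fun t ht => ?_
    have ht1 : (1:ℝ) ≤ t := le_of_lt ht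
    have ht0 : (0:ℝ) < t := lt_of_lt_of_le one_pos ht1
    have hr0 : r ≤ 0 := le_of_lt (lt_of_lt_of_le h2 (neg_nonpos.mpr (Nat.cast_nonneg m)))
    have htr : t ^ r ≤ 1 := Real.rpow_le_one_of_one_le_of_nonpos ht1 hr0
    have htrpos : (0:ℝ) ≤ t ^ r := (Real.rpow_pos_of_pos ht0 r).le
    rw [Real.norm_eq_abs, abs_mul, abs_of_pos (Real.rpow_pos_of_pos ht0 r)]
    calc |Prem m t| * t ^ r
        ≤ (Real.exp (-t) + Real.exp 1 * t ^ ((m:ℝ) - 1)) * t ^ r :=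
          mul_le_mul_of_nonneg_right (Prem_tail m ht1) htrpos
      _ = Real.exp (-t) * t ^ r + Real.exp 1 * (t ^ ((m:ℝ) - 1) * t ^ r) := by ring
      _ ≤ Real.exp (-1 * t) + Real.exp 1 * t ^ ((m:ℝ) - 1 + r) := by
          rw [← Real.rpow_add ht0, neg_one_mul]
          have hexp : Real.exp (-t) * t ^ r ≤ Real.exp (-t) := by
            nlinarith [Real.exp_pos (-t)]
          linarith
  have := hA.union hB
  rwa [Ioc_union_Ioi_eq_Ioi zero_le_one] at this

lemma Prem_integral_eq_Gamma : ∀ (m : ℕ) (s : ℝ), (m:ℝ) - 1 < s → s < m →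
    ∫ t in Ioi (0:ℝ), Prem m t * t ^ (-s - 1) = Real.Gamma (-s) := by
  intro m
  induction m with
  | zero =>
    intro s hs1 hs2
    rw [Real.Gamma_eq_integral (by simpa using hs2 : (0:ℝ) < -s)]
    refine setIntegral_congr_fun measurableSet_Ioi fun t _ => ?_
    rw [Prem_zero]
  | succ m ih =>
    intro s hs1 hs2
    have hms : (m:ℝ) < s := by push_cast at hs1; linarith
    have hsm1 : s < (m:ℝ) + 1 := by push_cast at hs2; linarith
    have hs0 : (0:ℝ) < s := lt_of_le_of_lt (Nat.cast_nonneg m) hms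
    have hsne : s ≠ 0 := ne_of_gt hs0
    set u : ℝ → ℝ := Prem (m+1) with hu_def
    set u' : ℝ → ℝ := fun t => -(Prem m t) with hu'_def
    set v : ℝ → ℝ := fun t => t ^ (-s) / (-s) with hv_def
    set v' : ℝ → ℝ := fun t => t ^ (-s - 1) with hv'_def
    have hu : ∀ x ∈ Ioi (0:ℝ), HasDerivAt u (u' x) x := fun x _ => Prem_hasDerivAt m x
    have hv : ∀ x ∈ Ioi (0:ℝ), HasDerivAt v (v' x) x := by
      intro x hx
      have h := (Real.hasDerivAt_rpow_const (x := x) (p := -s)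
        (Or.inl (ne_of_gt hx))).div_const (-s)
      refine h.congr_deriv ?_
      field_simp; rfl
    have huv' : IntegrableOn (u * v') (Ioi (0:ℝ)) := by
      have := Prem_integrableOn (m := m+1) (r := -s - 1)
        (by push_cast; linarith) (by push_cast; linarith)
      exact this
    have hu'v : IntegrableOn (u' * v) (Ioi (0:ℝ)) := by
      have h := (Prem_integrableOn (m := m) (r := -s)
        (by push_cast; linarith) (by push_cast; linarith)).mul_const s⁻¹
      have heq : (u' * v) = fun t : ℝ => (Prem m t * t ^ (-s)) * s⁻¹ := by
        funext t
        simp only [hu'_def, hv_def, Pi.mul_apply]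
        field_simp
      rw [heq]; exact h
    have h_zero : Tendsto (u * v) (𝓝[>] (0:ℝ)) (𝓝 0) := by
      apply squeeze_zero_norm' (a := fun t : ℝ => t ^ ((m:ℝ) + 1 - s) *
        (((Nat.factorial (m+1) : ℝ)) * s)⁻¹)
      · filter_upwards [self_mem_nhdsWithin] with t ht
        have ht0 : (0:ℝ) < t := ht
        have h1 : ‖(u * v) t‖ = |Prem (m+1) t| * (t ^ (-s) / s) := by
          simp only [Pi.mul_apply, hu_def, hv_def, norm_mul, Real.norm_eq_abs]
          rw [abs_div, abs_neg, abs_of_pos hs0, abs_of_pos (Real.rpow_pos_of_pos ht0 _)]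
        rw [h1]
        calc |Prem (m+1) t| * (t ^ (-s) / s)
            ≤ (t ^ (m+1) / (Nat.factorial (m+1))) * (t ^ (-s) / s) := by
              apply mul_le_mul_of_nonneg_right (Prem_bound (m+1) ht0.le)
              positivity
          _ = t ^ ((m:ℝ) + 1 - s) * (((Nat.factorial (m+1) : ℝ)) * s)⁻¹ := by
              rw [← Real.rpow_natCast t (m+1), div_mul_div_comm, ← Real.rpow_add ht0,
                show ((m+1:ℕ):ℝ) + -s = (m:ℝ) + 1 - s by push_cast; ring, div_eq_mul_inv]
      · have hp : (0:ℝ) < (m:ℝ) + 1 - s := by linarith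
        have hc : Tendsto (fun t : ℝ => t ^ ((m:ℝ) + 1 - s)) (𝓝[>] (0:ℝ)) (𝓝 0) := by
          have := (Real.continuousAt_rpow_const 0 ((m:ℝ)+1-s) (Or.inr hp.le)).tendsto
          rw [Real.zero_rpow (ne_of_gt hp)] at this
          exact this.mono_left nhdsWithin_le_nhds
        simpa using hc.mul_const _
    have h_infty : Tendsto (u * v) atTop (𝓝 0) := by
      apply squeeze_zero_norm' (a := fun t : ℝ =>
        Real.exp (-t) * s⁻¹ + (Real.exp 1 * s⁻¹) * t ^ ((m:ℝ) - s))
      · filter_upwards [eventually_ge_atTop (1:ℝ)] with t ht1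
        have ht0 : (0:ℝ) < t := lt_of_lt_of_le one_pos ht1
        have htr : t ^ (-s) ≤ 1 :=
          Real.rpow_le_one_of_one_le_of_nonpos ht1 (by linarith)
        have htrpos : (0:ℝ) ≤ t ^ (-s) := (Real.rpow_pos_of_pos ht0 _).le
        have h1 : ‖(u * v) t‖ = |Prem (m+1) t| * (t ^ (-s) / s) := by
          simp only [Pi.mul_apply, hu_def, hv_def, norm_mul, Real.norm_eq_abs]
          rw [abs_div, abs_neg, abs_of_pos hs0, abs_of_pos (Real.rpow_pos_of_pos ht0 _)]
        rw [h1]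
        calc |Prem (m+1) t| * (t ^ (-s) / s)
            ≤ (Real.exp (-t) + Real.exp 1 * t ^ (((m+1:ℕ):ℝ) - 1)) * (t ^ (-s) / s) := by
              apply mul_le_mul_of_nonneg_right (Prem_tail (m+1) ht1)
              positivity
          _ = Real.exp (-t) * (t ^ (-s) * s⁻¹)
              + (Real.exp 1 * s⁻¹) * (t ^ ((m:ℝ)) * t ^ (-s)) := by
              push_cast; ring_nf
          _ ≤ Real.exp (-t) * s⁻¹ + (Real.exp 1 * s⁻¹) * t ^ ((m:ℝ) - s) := by
              rw [← Real.rpow_add ht0, show (m:ℝ) + -s = (m:ℝ) - s by ring]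
              have hsinv : (0:ℝ) ≤ s⁻¹ := by positivity
              have e1 : Real.exp (-t) * (t ^ (-s) * s⁻¹) ≤ Real.exp (-t) * s⁻¹ :=
                mul_le_mul_of_nonneg_left (mul_le_of_le_one_left hsinv htr)
                  (Real.exp_pos (-t)).le
              linarith
      · have t1 : Tendsto (fun t : ℝ => Real.exp (-t) * s⁻¹) atTop (𝓝 0) := by
          simpa using (Real.tendsto_exp_neg_atTop_nhds_zero).mul_const s⁻¹
        have t2 : Tendsto (fun t : ℝ => (Real.exp 1 * s⁻¹) * t ^ ((m:ℝ) - s)) atTop (𝓝 0) := by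
          have h := tendsto_rpow_neg_atTop (y := s - (m:ℝ)) (by linarith)
          have h2 : Tendsto (fun t : ℝ => (Real.exp 1 * s⁻¹) * t ^ (-(s - (m:ℝ))))
              atTop (𝓝 0) := by simpa using h.const_mul (Real.exp 1 * s⁻¹)
          simpa only [neg_sub] using h2
        simpa using t1.add t2
    have key := integral_Ioi_mul_deriv_eq_deriv_mul hu hv huv' hu'v h_zero h_infty
    have hIH : ∫ x in Ioi (0:ℝ), u' x * v x = s⁻¹ * Real.Gamma (-(s-1)) := by
      have heq : ∀ x : ℝ, u' x * v x = (Prem m x * x ^ (-(s-1) - 1)) * s⁻¹ := by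
        intro x
        simp only [hu'_def, hv_def]
        rw [show -(s-1) - 1 = -s by ring]
        field_simp
      rw [show (fun x => u' x * v x) = fun x => (Prem m x * x ^ (-(s-1) - 1)) * s⁻¹ from
        funext heq]
      rw [integral_mul_const, ih (s-1) (by push_cast; linarith) (by push_cast; linarith)]
      ring
    calc ∫ t in Ioi (0:ℝ), Prem (m+1) t * t ^ (-s - 1)
        = ∫ x in Ioi (0:ℝ), u x * v' x := rfl
      _ = 0 - 0 - ∫ x in Ioi (0:ℝ), u' x * v x := key
      _ = Real.Gamma (-s) := by
          rw [hIH, show -(s-1) = -s + 1 by ring,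
            Real.Gamma_add_one (neg_ne_zero.mpr hsne)]
          field_simp
          ring

lemma lemA_int {n : ℕ} {s : ℝ} (hs1 : (n:ℝ) < s) (hs2 : s < n + 1) {x : ℝ} (hx : 0 ≤ x) :
    IntegrableOn (fun l : ℝ => Prem (n+1) (l * x) * l ^ (-s - 1)) (Ioi (0:ℝ)) := by
  rcases eq_or_lt_of_le hx with hx0 | hx0
  · have : (fun l : ℝ => Prem (n+1) (l * x) * l ^ (-s - 1)) = fun _ => 0 := by
      funext l; rw [← hx0, mul_zero, Prem_zero_eval, zero_mul]
    rw [this]; exact integrableOn_zero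
  · have hg : IntegrableOn (fun t : ℝ => Prem (n+1) t * t ^ (-s - 1)) (Ioi (0:ℝ)) :=
      Prem_integrableOn (by push_cast; linarith) (by push_cast; linarith)
    have hcomp : IntegrableOn
        (fun l : ℝ => Prem (n+1) (l * x) * (l * x) ^ (-s - 1)) (Ioi (0:ℝ)) := by
      have := (integrableOn_Ioi_comp_mul_right_iff
        (fun t : ℝ => Prem (n+1) t * t ^ (-s - 1)) 0 hx0).2
      simpa using this (by simpa using hg)
    have h2 := hcomp.mul_const (x ^ (s + 1))
    have hxx : x ^ (-s-1) * x ^ (s+1) = 1 := by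
      rw [← Real.rpow_add hx0]; norm_num
    refine MeasureTheory.IntegrableOn.congr_fun h2 (fun l hl => ?_) measurableSet_Ioi
    have hl0 : (0:ℝ) < l := hl
    rw [Real.mul_rpow hl0.le hx,
      show Prem (n+1) (l*x) * (l ^ (-s-1) * x ^ (-s-1)) * x ^ (s+1)
        = Prem (n+1) (l*x) * l ^ (-s-1) * (x ^ (-s-1) * x ^ (s+1)) by ring,
      hxx, mul_one]

lemma lemA_eq {n : ℕ} {s : ℝ} (hs1 : (n:ℝ) < s) (hs2 : s < n + 1) {x : ℝ} (hx : 0 ≤ x) :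
    ∫ l in Ioi (0:ℝ), Prem (n+1) (l * x) * l ^ (-s - 1) = Real.Gamma (-s) * x ^ s := by
  have hs0 : (0:ℝ) < s := lt_of_le_of_lt (Nat.cast_nonneg n) hs1
  rcases eq_or_lt_of_le hx with hx0 | hx0
  · rw [← hx0]
    simp [Prem_zero_eval, Real.zero_rpow hs0.ne']
  · have hg := Prem_integral_eq_Gamma (n+1) s (by push_cast; linarith)
      (by push_cast; linarith)
    have hxx : x ^ (-s-1) * x ^ (s+1) = 1 := by
      rw [← Real.rpow_add hx0]; norm_num
    have step1 : ∫ l in Ioi (0:ℝ), Prem (n+1) (l * x) * l ^ (-s - 1)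
        = ∫ l in Ioi (0:ℝ), (Prem (n+1) (l*x) * (l*x) ^ (-s-1)) * x ^ (s+1) := by
      refine setIntegral_congr_fun measurableSet_Ioi fun l hl => ?_
      have hl0 : (0:ℝ) < l := hl
      rw [Real.mul_rpow hl0.le hx,
        show Prem (n+1) (l*x) * (l ^ (-s-1) * x ^ (-s-1)) * x ^ (s+1)
          = Prem (n+1) (l*x) * l ^ (-s-1) * (x ^ (-s-1) * x ^ (s+1)) by ring,
        hxx, mul_one]
    rw [step1, integral_mul_const]
    have hcm := integral_comp_mul_right_Ioi
      (fun t : ℝ => Prem (n+1) t * t ^ (-s-1)) 0 hx0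
    simp only [zero_mul] at hcm
    rw [hcm, hg, smul_eq_mul, Real.rpow_add hx0, Real.rpow_one]
    field_simp

section Main

variable {Ω : Type*} [MeasurableSpace Ω] {μ : Measure Ω} [IsProbabilityMeasure μ]
  {X : Ω → ℝ} {n : ℕ} {s : ℝ}

lemma moments_integrable (hX : Measurable X) (hXnn : ∀ ω, 0 ≤ X ω)
    (hs1 : (n : ℝ) < s) (hint : Integrable (fun ω => X ω ^ s) μ) :
    ∀ k ∈ Finset.range (n+1), Integrable (fun ω => X ω ^ k) μ := by
  intro k hk
  have hk' : (k:ℝ) ≤ s := by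
    have h1 := Nat.lt_succ_iff.1 (Finset.mem_range.1 hk)
    have h2 : (k:ℝ) ≤ (n:ℝ) := Nat.cast_le.2 h1
    linarith
  refine Integrable.mono' ((integrable_const (1:ℝ)).add hint)
    ((hX.pow_const k).aestronglyMeasurable) (Eventually.of_forall fun ω => ?_)
  have hx := hXnn ω
  rw [Real.norm_eq_abs, abs_of_nonneg (pow_nonneg hx k)]
  have hrs : 0 ≤ X ω ^ s := Real.rpow_nonneg hx s
  rcases le_total (X ω) 1 with h1 | h1
  · have hp1 : X ω ^ k ≤ 1 := pow_le_one₀ hx h1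
    simpa using by linarith
  · have hnk : X ω ^ k = X ω ^ (k:ℝ) := (Real.rpow_natCast _ k).symm
    rw [hnk]
    have h2 : X ω ^ (k:ℝ) ≤ X ω ^ s := Real.rpow_le_rpow_of_exponent_le h1 hk'
    simpa using by linarith

lemma exp_integrable (hX : Measurable X) (hXnn : ∀ ω, 0 ≤ X ω) {l : ℝ} (hl : 0 ≤ l) :
    Integrable (fun ω => Real.exp (-(l * X ω))) μ := by
  refine Integrable.mono' (integrable_const (1:ℝ))
    ((Real.measurable_exp.comp ((measurable_const.mul hX).neg)).aestronglyMeasurable)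
    (Eventually.of_forall fun ω => ?_)
  rw [Real.norm_eq_abs, abs_of_pos (Real.exp_pos _)]
  have h0 : -(l * X ω) ≤ 0 := by nlinarith [hXnn ω]
  calc Real.exp (-(l * X ω)) ≤ Real.exp 0 := Real.exp_le_exp.2 h0
    _ = 1 := Real.exp_zero

lemma inner_eq (hX : Measurable X) (hXnn : ∀ ω, 0 ≤ X ω)
    (hs1 : (n : ℝ) < s) (hint : Integrable (fun ω => X ω ^ s) μ)
    {l : ℝ} (hl : 0 ≤ l) :
    (∫ ω, Real.exp (-(l * X ω)) ∂μ)
      - ∑ k ∈ Finset.range (n+1),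
          (-1:ℝ)^k * (∫ ω, X ω ^ k ∂μ) * l^k / (Nat.factorial k)
    = ∫ ω, Prem (n+1) (l * X ω) ∂μ := by
  have hMk := moments_integrable hX hXnn hs1 hint
  have hterm : ∀ k ∈ Finset.range (n+1),
      Integrable (fun ω => (-1:ℝ)^k * (l * X ω)^k / (Nat.factorial k)) μ := by
    intro k hk
    have h := (hMk k hk).const_mul ((-1:ℝ)^k * l^k / (Nat.factorial k))
    refine h.congr (Eventually.of_forall fun ω => ?_)
    simp only [mul_pow]; ring
  have hPeq : (fun ω => Prem (n+1) (l * X ω))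
      = fun ω => Real.exp (-(l * X ω))
        - ∑ k ∈ Finset.range (n+1), (-1:ℝ)^k * (l * X ω)^k / (Nat.factorial k) :=
    funext fun ω => by rw [Prem]
  rw [hPeq, integral_sub (exp_integrable hX hXnn hl) (integrable_finset_sum _ hterm),
    integral_finset_sum _ hterm]
  congr 1
  refine Finset.sum_congr rfl fun k hk => ?_
  have heq : (fun ω => (-1:ℝ)^k * (l * X ω)^k / (Nat.factorial k))
      = fun ω => ((-1:ℝ)^k * l^k / (Nat.factorial k)) * (X ω ^ k) := by
    funext ω; simp only [mul_pow]; ring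
  rw [heq, integral_const_mul]
  ring

lemma fubini_key (hX : Measurable X) (hXnn : ∀ ω, 0 ≤ X ω)
    (hs1 : (n : ℝ) < s) (hs2 : s < n + 1) (hint : Integrable (fun ω => X ω ^ s) μ) :
    (∫ l in Ioi (0:ℝ), ∫ ω, Prem (n+1) (l * X ω) * l ^ (-s-1) ∂μ)
      = Real.Gamma (-s) * ∫ ω, X ω ^ s ∂μ := by
  set c : ℝ := (-1:ℝ)^(n+1) with hc_def
  have hcabs : |c| = 1 := by rw [hc_def, abs_pow, abs_neg, abs_one, one_pow]
  have hF_meas : Measurable (Function.uncurry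
      fun (l : ℝ) (ω : Ω) => Prem (n+1) (l * X ω) * l ^ (-s-1)) := by
    have h : Measurable fun p : ℝ × Ω => Prem (n+1) (p.1 * X p.2) * p.1 ^ (-s-1) :=
      ((Prem_continuous (n+1)).measurable.comp
        (measurable_fst.mul (hX.comp measurable_snd))).mul
        (measurable_fst.pow_const _)
    exact h
  have hnorm : ∀ ω, (∫ l in Ioi (0:ℝ), ‖Prem (n+1) (l * X ω) * l ^ (-s-1)‖)
      = c * (Real.Gamma (-s) * X ω ^ s) := by
    intro ω
    have h1 : (∫ l in Ioi (0:ℝ), ‖Prem (n+1) (l * X ω) * l ^ (-s-1)‖)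
        = ∫ l in Ioi (0:ℝ), c * (Prem (n+1) (l * X ω) * l ^ (-s-1)) := by
      refine setIntegral_congr_fun measurableSet_Ioi fun l hl => ?_
      have hl0 : (0:ℝ) < l := hl
      have hsign : 0 ≤ c * Prem (n+1) (l * X ω) :=
        Prem_sign (n+1) (mul_nonneg hl0.le (hXnn ω))
      have hpos : (0:ℝ) < l ^ (-s-1) := Real.rpow_pos_of_pos hl0 _
      have hnn : 0 ≤ c * (Prem (n+1) (l * X ω) * l ^ (-s-1)) := by nlinarith
      calc ‖Prem (n+1) (l * X ω) * l ^ (-s-1)‖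
          = |c * (Prem (n+1) (l * X ω) * l ^ (-s-1))| := by
            rw [abs_mul, hcabs, one_mul, Real.norm_eq_abs]
        _ = c * (Prem (n+1) (l * X ω) * l ^ (-s-1)) := abs_of_nonneg hnn
    rw [h1, integral_const_mul, lemA_eq hs1 hs2 (hXnn ω)]
  have hFint : Integrable (Function.uncurry
      fun (l : ℝ) (ω : Ω) => Prem (n+1) (l * X ω) * l ^ (-s-1))
      ((volume.restrict (Ioi (0:ℝ))).prod μ) := by
    rw [integrable_prod_iff' hF_meas.aestronglyMeasurable]
    constructor
    · refine Eventually.of_forall fun ω => ?_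
      simp only [Function.uncurry_apply_pair]
      exact lemA_int hs1 hs2 (hXnn ω)
    · refine (hint.const_mul (c * Real.Gamma (-s))).congr
        (Eventually.of_forall fun ω => ?_)
      simp only [Function.uncurry_apply_pair]
      rw [hnorm ω]; ring
  have hswap := integral_integral_swap hFint
  rw [hswap]
  rw [show (fun ω => ∫ l in Ioi (0:ℝ), Prem (n+1) (l * X ω) * l ^ (-s-1))
      = fun ω => Real.Gamma (-s) * X ω ^ s from
    funext fun ω => lemA_eq hs1 hs2 (hXnn ω)]
  exact integral_const_mul _ _

end Main

theorem stmt11 {Ω : Type*} [MeasurableSpace Ω] (μ : Measure Ω) [IsProbabilityMeasure μ]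
    (X : Ω → ℝ) (hX : Measurable X) (hXnn : ∀ ω, 0 ≤ X ω) (n : ℕ) (s : ℝ)
    (hs1 : (n : ℝ) < s) (hs2 : s < n + 1)
    (hint : Integrable (fun ω => X ω ^ s) μ) :
    ∫ ω, X ω ^ s ∂μ
      = (-1 : ℝ) ^ (n + 1) / Real.Gamma (-s)
        * ∫ l in Ioi (0 : ℝ),
            ((-1 : ℝ) ^ (n + 1) *
              ((∫ ω, Real.exp (-(l * X ω)) ∂μ)
                - ∑ k ∈ Finset.range (n + 1),
                    (-1 : ℝ) ^ k * (∫ ω, X ω ^ k ∂μ) * l ^ k / (Nat.factorial k)))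
              / l ^ (s + 1) := by
  set c : ℝ := (-1:ℝ)^(n+1) with hc_def
  have hcc : c * c = 1 := by
    rw [hc_def, ← pow_add]
    exact Even.neg_one_pow ⟨n+1, rfl⟩
  have hGamma_ne : Real.Gamma (-s) ≠ 0 := by
    apply Real.Gamma_ne_zero
    intro m hm
    have hsm : s = (m:ℝ) := by linarith [neg_injective hm]
    rw [hsm] at hs1 hs2
    have h1 : n < m := Nat.cast_lt.mp hs1
    have h2' : m < n + 1 := by exact_mod_cast hs2
    omega
  have hgoal_int : (∫ l in Ioi (0:ℝ),
        (c * ((∫ ω, Real.exp (-(l * X ω)) ∂μ)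
          - ∑ k ∈ Finset.range (n + 1),
              (-1 : ℝ) ^ k * (∫ ω, X ω ^ k ∂μ) * l ^ k / (Nat.factorial k)))
          / l ^ (s + 1))
      = c * (Real.Gamma (-s) * ∫ ω, X ω ^ s ∂μ) := by
    rw [← fubini_key hX hXnn hs1 hs2 hint, ← integral_const_mul]
    refine setIntegral_congr_fun measurableSet_Ioi fun l hl => ?_
    have hl0 : (0:ℝ) < l := hl
    rw [inner_eq hX hXnn hs1 hint hl0.le]
    rw [show (∫ ω, Prem (n+1) (l * X ω) * l ^ (-s-1) ∂μ)
        = (∫ ω, Prem (n+1) (l * X ω) ∂μ) * l ^ (-s-1) from integral_mul_const _ _]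
    rw [show (-s-1 : ℝ) = -(s+1) by ring, Real.rpow_neg hl0.le]
    field_simp
  rw [hgoal_int]
  have hfin : c / Real.Gamma (-s) * (c * (Real.Gamma (-s) * ∫ ω, X ω ^ s ∂μ))
      = (c*c) * ((Real.Gamma (-s) / Real.Gamma (-s)) * ∫ ω, X ω ^ s ∂μ) := by ring
  rw [hfin, hcc, div_self hGamma_ne, one_mul, one_mul]
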